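/- Fix L > 0, s ∈ ℤ', and σ : ℤ' → [0,1] with Σ_{l<0} σ(l) < ∞. If Y solves the discrete Riemann–Hilbert problem with data W (conditions (a), (b), (c) below), then det Y(z) = 1 for all z ∈ ℂ \ ℤ'. -/

import Mathlib

open scoped Topology

/-!
Half-integers `ℤ' = ℤ + 1/2` are parametrized by `ℤ`: the half-integer `a = m + 1/2`
corresponds to `m : ℤ`; `σ : ℤ' → [0,1]` is represented as `σ : ℤ → ℝ` and `s = t + 1/2` by
`t : ℤ`.  Thus `σ(a - s - 1/2)` reads `σ (m - t - 1)`, `J_{a-1/2} = J_m`, `J_{a+1/2} = J_{m+1}`,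
and `K^Be(a,a) = ∑_{j≥0} J_{m+j+1}(2L)²`.  Holomorphy, analyticity and the decay condition for
matrix-valued functions are expressed entrywise (any matrix norm gives an equivalent
formulation).
-/
noncomputable def besselJnat (L : ℝ) (n : ℕ) : ℝ :=
  ∑' j : ℕ, (-1 : ℝ) ^ j * L ^ (2 * j + n) / (Nat.factorial j * Nat.factorial (n + j))

noncomputable def besselJint (L : ℝ) (n : ℤ) : ℝ :=
  if 0 ≤ n then besselJnat L n.toNat else (-1 : ℝ) ^ (-n).toNat * besselJnat L (-n).toNat

/-- Diagonal of the discrete Bessel kernel, `K^Be(m + 1/2, m + 1/2)`. -/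
noncomputable def KBeDiag (L : ℝ) (m : ℤ) : ℝ :=
  ∑' j : ℕ, besselJint L (m + j + 1) * besselJint L (m + j + 1)

/-- `f(a) = √σ(a-s-1/2) (J_{a-1/2}(2L), L J_{a+1/2}(2L))ᵀ` for `a = m + 1/2`. -/
noncomputable def fvec (σ : ℤ → ℝ) (L : ℝ) (t m : ℤ) : Fin 2 → ℝ :=
  ![Real.sqrt (σ (m - t - 1)) * besselJint L m,
    Real.sqrt (σ (m - t - 1)) * (L * besselJint L (m + 1))]

/-- `g(a) = √σ(a-s-1/2) (L J_{a+1/2}(2L), -J_{a-1/2}(2L))ᵀ` for `a = m + 1/2`. -/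
noncomputable def gvec (σ : ℤ → ℝ) (L : ℝ) (t m : ℤ) : Fin 2 → ℝ :=
  ![Real.sqrt (σ (m - t - 1)) * (L * besselJint L (m + 1)),
    Real.sqrt (σ (m - t - 1)) * (-besselJint L m)]

/-- `W(a) = f(a) g(a)ᵀ / (1 - σ(a-s-1/2) K^Be(a,a))` for `a = m + 1/2`. -/
noncomputable def Wmat (σ : ℤ → ℝ) (L : ℝ) (t m : ℤ) : Matrix (Fin 2) (Fin 2) ℂ :=
  fun i j => ((fvec σ L t m i * gvec σ L t m j / (1 - σ (m - t - 1) * KBeDiag L m) : ℝ) : ℂ)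

/-- `Y` solves the discrete Riemann–Hilbert problem with data `W`:
(a) `Y` is holomorphic on `ℂ \ ℤ'`;
(b) for every `a ∈ ℤ'`, `z ↦ Y(z)(I - W(a)/(z-a))` extends holomorphically near `a`;
(c) `sup_{|z|=n} |Y(z) - I| → 0` as `n → ∞` through positive integers. -/
def SolvesRH (W : ℤ → Matrix (Fin 2) (Fin 2) ℂ) (Y : ℂ → Matrix (Fin 2) (Fin 2) ℂ) : Prop :=
  (∀ i j, DifferentiableOn ℂ (fun z => Y z i j) {z : ℂ | ∀ m : ℤ, z ≠ (m : ℂ) + 1 / 2}) ∧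
  (∀ m : ℤ, ∃ h : ℂ → Matrix (Fin 2) (Fin 2) ℂ,
      (∀ i j, AnalyticAt ℂ (fun z => h z i j) ((m : ℂ) + 1 / 2)) ∧
      ∀ᶠ z in 𝓝[≠] ((m : ℂ) + 1 / 2),
        h z = Y z * (1 - (z - ((m : ℂ) + 1 / 2))⁻¹ • W m)) ∧
  (∀ ε : ℝ, 0 < ε → ∃ N : ℕ, 0 < N ∧ ∀ n : ℕ, N ≤ n → ∀ z : ℂ, ‖z‖ = n →
      ∀ i j, ‖(Y z - 1) i j‖ < ε)

/-!
Each `W(a)` is a rank-one matrix `u vᵀ` with `vᵀ u = 0`, so by the matrix determinant lemma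
`det (I - W(a)/(z - a)) = 1`. Hence `det Y` agrees near every `a ∈ ℤ'` with the determinant of a
holomorphic function, so it extends to an entire function; this tends to `1` uniformly on the
circles `|z| = n`, and the maximum modulus principle forces it to be identically `1`.
-/

open Filter Set Metric Matrix

theorem Matrix.det_one_sub_smul_vecMulVec {n α : Type*} [Fintype n] [DecidableEq n] [CommRing α]
    (c : α) {u v : n → α} (h : v ⬝ᵥ u = 0) : det (1 - c • vecMulVec u v) = 1 := by
  rw [← smul_vecMulVec, sub_eq_add_neg, ← neg_vecMulVec, vecMulVec_eq Unit,
    det_one_add_replicateCol_mul_replicateRow, dotProduct_neg, dotProduct_smul, h]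
  simp

theorem Wmat_eq_vecMulVec (σ : ℤ → ℝ) (L : ℝ) (t m : ℤ) :
    Wmat σ L t m = vecMulVec
      (fun i => ((fvec σ L t m i / (1 - σ (m - t - 1) * KBeDiag L m) : ℝ) : ℂ))
      (fun j => (gvec σ L t m j : ℂ)) := by
  ext i j
  simp only [Wmat, vecMulVec_apply]
  push_cast
  ring

theorem det_one_sub_smul_Wmat (σ : ℤ → ℝ) (L : ℝ) (t m : ℤ) (c : ℂ) :
    det (1 - c • Wmat σ L t m) = 1 := by
  rw [Wmat_eq_vecMulVec]
  refine det_one_sub_smul_vecMulVec c ?_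
  simp only [dotProduct, Fin.sum_univ_two, fvec, gvec, Matrix.cons_val_zero, Matrix.cons_val_one]
  push_cast
  ring

theorem Matrix.norm_det_sub_one_le {R : Type*} [SeminormedCommRing R]
    {A : Matrix (Fin 2) (Fin 2) R} {ε : ℝ} (hε : ε ≤ 1) (hA : ∀ i j, ‖(A - 1) i j‖ ≤ ε) :
    ‖A.det - 1‖ ≤ 4 * ε := by
  have h00 : ‖A 0 0 - 1‖ ≤ ε := by simpa using hA 0 0
  have h11 : ‖A 1 1 - 1‖ ≤ ε := by simpa using hA 1 1
  have h01 : ‖A 0 1‖ ≤ ε := by simpa using hA 0 1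
  have h10 : ‖A 1 0‖ ≤ ε := by simpa using hA 1 0
  have hε0 : 0 ≤ ε := (norm_nonneg _).trans h01
  have hdet : A.det - 1 =
      (A 0 0 - 1) + (A 1 1 - 1) + (A 0 0 - 1) * (A 1 1 - 1) - A 0 1 * A 1 0 := by
    rw [det_fin_two]; ring
  calc ‖A.det - 1‖
      ≤ ‖A 0 0 - 1‖ + ‖A 1 1 - 1‖ + ‖A 0 0 - 1‖ * ‖A 1 1 - 1‖ + ‖A 0 1‖ * ‖A 1 0‖ := by
        rw [hdet]
        refine (norm_sub_le _ _).trans (add_le_add ?_ (norm_mul_le _ _))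
        exact (norm_add_le _ _).trans (add_le_add (norm_add_le _ _) (norm_mul_le _ _))
    _ ≤ ε + ε + ε * ε + ε * ε := by gcongr
    _ ≤ 4 * ε := by nlinarith

theorem Differentiable.eq_of_eventually_norm_sub_le_on_spheres {G : ℂ → ℂ}
    (hG : Differentiable ℂ G) {c : ℂ}
    (h : ∀ ε > 0, ∀ᶠ n : ℕ in atTop, ∀ w : ℂ, ‖w‖ = n → ‖G w - c‖ ≤ ε) (z : ℂ) : G z = c := by
  refine eq_of_forall_dist_le fun ε hε => ?_
  obtain ⟨n, hn, hzn⟩ :=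
    ((h ε hε).and (tendsto_natCast_atTop_atTop.eventually_gt_atTop ‖z‖)).exists
  have hn0 : (n : ℝ) ≠ 0 := (lt_of_le_of_lt (norm_nonneg z) hzn).ne'
  rw [dist_eq_norm]
  refine Complex.norm_le_of_forall_mem_frontier_norm_le isBounded_ball
    (hG.sub_const c).diffContOnCl (fun w hw => hn w ?_)
    (subset_closure (mem_ball_zero_iff.mpr hzn))
  simpa [frontier_ball _ hn0] using hw

theorem exists_differentiable_eqOn_compl {S : Set ℂ} (hS : IsClosed S)
    (hiso : ∀ a ∈ S, ∀ᶠ z in 𝓝[≠] a, z ∉ S) {F : ℂ → ℂ} (hF : DifferentiableOn ℂ F Sᶜ)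
    (hext : ∀ a ∈ S, ∃ φ : ℂ → ℂ, AnalyticAt ℂ φ a ∧ F =ᶠ[𝓝[≠] a] φ) :
    ∃ G : ℂ → ℂ, Differentiable ℂ G ∧ EqOn G F Sᶜ := by
  classical
  choose! φ hφ hFφ using hext
  refine ⟨fun z => if z ∈ S then φ z z else F z, fun z => ?_, fun z hz => if_neg hz⟩
  by_cases hz : z ∈ S
  · refine ((hφ z hz).congr (eventuallyEq_nhds_of_eventuallyEq_nhdsNE ?_ ?_).symm).differentiableAt
    · filter_upwards [hiso z hz, hFφ z hz] with w hw hFw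
      rw [if_neg hw, hFw]
    · exact if_pos hz
  · have hnhds : Sᶜ ∈ 𝓝 z := hS.isOpen_compl.mem_nhds hz
    refine (hF.differentiableAt hnhds).congr_of_eventuallyEq ?_
    filter_upwards [hnhds] with w hw using if_neg hw

def halfInts : Set ℂ := range fun m : ℤ => (m : ℂ) + 1 / 2

theorem isClosedEmbedding_halfInt : Topology.IsClosedEmbedding fun m : ℤ => (m : ℂ) + 1 / 2 :=
  (Homeomorph.addRight (1 / 2 : ℂ)).isClosedEmbedding.comp
    (Complex.isometry_ofReal.isClosedEmbedding.comp Int.isClosedEmbedding_coe_real)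

theorem isClosed_halfInts : IsClosed halfInts := isClosedEmbedding_halfInt.isClosed_range

theorem eventually_notMem_halfInts {a : ℂ} (ha : a ∈ halfInts) :
    ∀ᶠ z in 𝓝[≠] a, z ∉ halfInts := by
  obtain ⟨m, rfl⟩ := ha
  have hclosed := isClosedEmbedding_halfInt.isClosedMap _ (isClosed_discrete {m}ᶜ)
  have hm : (m : ℂ) + 1 / 2 ∉ (fun k : ℤ => (k : ℂ) + 1 / 2) '' {m}ᶜ := by
    rintro ⟨k, hk, hkm⟩
    exact hk (isClosedEmbedding_halfInt.injective hkm)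
  filter_upwards [nhdsWithin_le_nhds (hclosed.isOpen_compl.mem_nhds hm), self_mem_nhdsWithin]
    with z hz hza
  rintro ⟨k, rfl⟩
  exact hz ⟨k, fun hk => hza (by simp [mem_singleton_iff.mp hk]), rfl⟩

theorem norm_ne_natCast_of_mem_halfInts {z : ℂ} (hz : z ∈ halfInts) (n : ℕ) : ‖z‖ ≠ n := by
  obtain ⟨m, rfl⟩ := hz
  have hnorm : ‖(m : ℂ) + 1 / 2‖ = |((2 * m + 1 : ℤ) : ℝ)| / 2 := by
    rw [show (m : ℂ) + 1 / 2 = ((((2 * m + 1 : ℤ) : ℝ) / 2 : ℝ) : ℂ) by push_cast; ring,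
      Complex.norm_real, Real.norm_eq_abs, abs_div, abs_two]
  rw [hnorm, ← Int.cast_abs]
  intro h
  have : |2 * m + 1| = 2 * (n : ℤ) := by
    exact_mod_cast ((div_eq_iff two_ne_zero).mp h).trans (mul_comm _ _)
  rcases abs_cases (2 * m + 1) with ⟨h', -⟩ | ⟨h', -⟩ <;> omega

theorem compl_halfInts : halfIntsᶜ = {z : ℂ | ∀ m : ℤ, z ≠ (m : ℂ) + 1 / 2} := by
  ext z
  simp [halfInts, eq_comm]

theorem eventually_norm_det_sub_one_le {Y : ℂ → Matrix (Fin 2) (Fin 2) ℂ}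
    (hY : ∀ ε : ℝ, 0 < ε → ∃ N : ℕ, 0 < N ∧ ∀ n : ℕ, N ≤ n → ∀ z : ℂ, ‖z‖ = n →
      ∀ i j, ‖(Y z - 1) i j‖ < ε) :
    ∀ ε > 0, ∀ᶠ n : ℕ in atTop, ∀ w : ℂ, ‖w‖ = n → ‖(Y w).det - 1‖ ≤ ε := by
  intro ε hε
  obtain ⟨N, -, hN⟩ := hY (min (ε / 4) 1) (by positivity)
  filter_upwards [eventually_ge_atTop N] with n hn w hw
  calc ‖(Y w).det - 1‖ ≤ 4 * min (ε / 4) 1 :=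
        norm_det_sub_one_le (min_le_right _ _) fun i j => (hN n hn w hw i j).le
    _ ≤ ε := by linarith [min_le_left (ε / 4) 1]

theorem discreteRH_det_one_general (σ : ℤ → ℝ) (L : ℝ) (t : ℤ)
    (Y : ℂ → Matrix (Fin 2) (Fin 2) ℂ) (hY : SolvesRH (Wmat σ L t) Y) :
    ∀ z : ℂ, (∀ m : ℤ, z ≠ (m : ℂ) + 1 / 2) → Matrix.det (Y z) = 1 := by
  obtain ⟨hhol, hpole, hdecay⟩ := hY
  have hdet_hol : DifferentiableOn ℂ (fun z => (Y z).det) halfIntsᶜ := by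
    simp only [compl_halfInts, det_fin_two]
    exact ((hhol 0 0).mul (hhol 1 1)).sub ((hhol 0 1).mul (hhol 1 0))
  have hdet_pole : ∀ a ∈ halfInts, ∃ φ : ℂ → ℂ,
      AnalyticAt ℂ φ a ∧ (fun z => (Y z).det) =ᶠ[𝓝[≠] a] φ := by
    rintro _ ⟨m, rfl⟩
    obtain ⟨h, hh, hYh⟩ := hpole m
    refine ⟨fun z => (h z).det, ?_, ?_⟩
    · simp only [det_fin_two]
      exact ((hh 0 0).mul (hh 1 1)).sub ((hh 0 1).mul (hh 1 0))
    · filter_upwards [hYh] with z hz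
      rw [hz, det_mul, det_one_sub_smul_Wmat, mul_one]
  obtain ⟨G, hG, hGY⟩ := exists_differentiable_eqOn_compl isClosed_halfInts
    (fun _ => eventually_notMem_halfInts) hdet_hol hdet_pole
  have hG_one : ∀ z, G z = 1 := hG.eq_of_eventually_norm_sub_le_on_spheres fun ε hε =>
    (eventually_norm_det_sub_one_le hdecay ε hε).mono fun n hn w hw => by
      rw [hGY fun hw' => norm_ne_natCast_of_mem_halfInts hw' n hw]
      exact hn w hw
  intro z hz
  exact (hGY (compl_halfInts ▸ hz : z ∈ halfIntsᶜ)).symm.trans (hG_one z)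

/-- any solution of the discrete Riemann–Hilbert problem with data `W` has
unit determinant on `ℂ \ ℤ'`. -/
theorem discreteRH_det_one (σ : ℤ → ℝ) (hσ : ∀ k : ℤ, σ k ∈ Set.Icc (0 : ℝ) 1)
    (hsum : Summable (fun k : {k : ℤ // k < 0} => σ k)) (L : ℝ) (hL : 0 < L) (t : ℤ)
    (Y : ℂ → Matrix (Fin 2) (Fin 2) ℂ) (hY : SolvesRH (Wmat σ L t) Y) :
    ∀ z : ℂ, (∀ m : ℤ, z ≠ (m : ℂ) + 1 / 2) → Matrix.det (Y z) = 1 :=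
  discreteRH_det_one_general σ L t Y hY
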